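/- For every (x*, r) ∈ X* × ℝ the following are equivalent: (i) every x ∈ X satisfying G_u(x) ∈ −S for all u ∈ 𝒰 also satisfies ⟨x*, x⟩ ≥ r; (ii) (x*, r) ∈ −oco 𝓜₀, where oco denotes the closed convex hull in X* × ℝ (weak*-topology on X* times the usual topology on ℝ). -/

import Mathlib

open Pointwise

/-!
The feasible set is exactly the solution set of the linear system `⟨x*, x⟩ ≤ r`,
`(x*, r) ∈ 𝓜₀`: if `G_u(x) ∉ -S`, strictly separating `(x, 0)` from the closed convex
`S`-epigraph of `G_u` produces some `λ ∈ S⁺` and an element of `epi (λG_u)*` violated at `x`.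
The theorem is then a Farkas lemma for this system over the weak* dual. If `(a, b)` lies outside
the closed convex hull of the cone `𝓜₀`, a separating functional on `X* × ℝ` has the form
`(x*, s) ↦ ⟨x*, x₁⟩ + c s` with `c ≤ 0`; for a feasible `x₀`, the points
`(x₀ + t x₁) / (1 - t c)`, `t ≥ 0`, are feasible and violate `⟨a, ·⟩ ≤ b` for large `t`.
-/

theorem nonpos_of_forall_mul_lt {y u : ℝ} (h : ∀ t : ℝ, 0 ≤ t → t * y < u) : y ≤ 0 := by
  by_contra! hy
  have := h (max u 0 / y) (by positivity)
  rw [div_mul_cancel₀ _ hy.ne'] at this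
  exact (le_max_left u 0).not_gt this

section WeakDual

variable {X : Type*} [AddCommGroup X] [Module ℝ X] [TopologicalSpace X]

instance WeakDual.instLocallyConvexSpace : LocallyConvexSpace ℝ (WeakDual ℝ X) :=
  WeakBilin.locallyConvexSpace (B := topDualPairing ℝ X)

theorem WeakDual.exists_eq_apply_add_mul (f : WeakDual ℝ X × ℝ →L[ℝ] ℝ) :
    ∃ (x : X) (c : ℝ), ∀ q : WeakDual ℝ X × ℝ, f q = q.1 x + c * q.2 := by
  obtain ⟨x, hx⟩ := (topDualPairing ℝ X).dualEmbedding_surjective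
    (f.comp (.inl ℝ (WeakDual ℝ X) ℝ))
  refine ⟨x, f (0, 1), fun q => ?_⟩
  rw [← f.comp_inl_add_comp_inr]
  congr 1
  · exact (DFunLike.congr_fun hx q.1).symm
  calc f (0, q.2) = f (q.2 • (0, 1)) := by simp
    _ = f (0, 1) * q.2 := by rw [map_smul, smul_eq_mul, mul_comm]

def solutionSet (M : Set (WeakDual ℝ X × ℝ)) : Set X := {x | ∀ q ∈ M, q.1 x ≤ q.2}

theorem le_of_mem_closure_convexHull {M : Set (WeakDual ℝ X × ℝ)} {a : WeakDual ℝ X} {b : ℝ}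
    (hab : (a, b) ∈ closure (convexHull ℝ M)) {x : X} (hx : x ∈ solutionSet M) : a x ≤ b := by
  have hclosed : IsClosed {q : WeakDual ℝ X × ℝ | q.1 x ≤ q.2} :=
    isClosed_le ((WeakDual.eval_continuous x).comp continuous_fst) continuous_snd
  have hconvex : Convex ℝ {q : WeakDual ℝ X × ℝ | q.1 x ≤ q.2} := by
    simpa only [sub_nonpos] using convex_halfSpace_le (r := (0 : ℝ))
      (f := fun q : WeakDual ℝ X × ℝ => q.1 x - q.2)
      ⟨fun p q => show p.1 x + q.1 x - (p.2 + q.2) = _ by ring,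
        fun c q => show c * q.1 x - c * q.2 = _ by simp only [smul_eq_mul]; ring⟩
  exact closure_minimal (convexHull_min hx hconvex) hclosed hab

theorem mem_closure_convexHull_of_forall_le {M : Set (WeakDual ℝ X × ℝ)}
    (hM_smul : ∀ t : ℝ, 0 ≤ t → ∀ q ∈ M, t • q ∈ M) (hM_one : ((0 : WeakDual ℝ X), (1 : ℝ)) ∈ M)
    (hM_sol : (solutionSet M).Nonempty) {a : WeakDual ℝ X} {b : ℝ}
    (hab : ∀ x ∈ solutionSet M, a x ≤ b) : (a, b) ∈ closure (convexHull ℝ M) := by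
  by_contra hab_not
  obtain ⟨f, u, hf_lt, hu_lt⟩ := geometric_hahn_banach_closed_point
    (convex_convexHull ℝ M).closure isClosed_closure hab_not
  obtain ⟨x₁, c, hf⟩ := WeakDual.exists_eq_apply_add_mul f
  have hfM : ∀ q ∈ M, f q < u := fun q hq => hf_lt q (subset_closure (subset_convexHull ℝ M hq))
  have hu : 0 < u := by simpa using hfM 0 (by simpa using hM_smul 0 le_rfl _ hM_one)
  have hfM_nonpos : ∀ q ∈ M, q.1 x₁ + c * q.2 ≤ 0 := fun q hq =>
    hf q ▸ nonpos_of_forall_mul_lt fun t ht => by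
      simpa [map_smul] using hfM _ (hM_smul t ht q hq)
  have hc : c ≤ 0 := by
    have : (0 : ℝ) + c * 1 ≤ 0 := hfM_nonpos _ hM_one
    linarith
  obtain ⟨x₀, hx₀⟩ := hM_sol
  have hden : ∀ t : ℝ, 0 ≤ t → 0 < 1 - t * c := fun t ht => by nlinarith
  have hsol : ∀ t : ℝ, 0 ≤ t → (1 - t * c)⁻¹ • (x₀ + t • x₁) ∈ solutionSet M := by
    intro t ht q hq
    simp only [map_smul, map_add, smul_eq_mul]
    rw [inv_mul_le_iff₀ (hden t ht)]
    nlinarith [hx₀ q hq, hfM_nonpos q hq]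
  have hab_nonpos : a x₁ + c * b ≤ 0 := nonpos_of_forall_mul_lt (u := b - a x₀ + 1) fun t ht => by
    have := hab _ (hsol t ht)
    simp only [map_smul, map_add, smul_eq_mul] at this
    rw [inv_mul_le_iff₀ (hden t ht)] at this
    nlinarith
  have hab_gt : u < a x₁ + c * b := hf (a, b) ▸ hu_lt
  linarith

theorem mem_closure_convexHull_iff_forall_le {M : Set (WeakDual ℝ X × ℝ)}
    (hM_smul : ∀ t : ℝ, 0 ≤ t → ∀ q ∈ M, t • q ∈ M) (hM_one : ((0 : WeakDual ℝ X), (1 : ℝ)) ∈ M)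
    (hM_sol : (solutionSet M).Nonempty) {a : WeakDual ℝ X} {b : ℝ} :
    (a, b) ∈ closure (convexHull ℝ M) ↔ ∀ x ∈ solutionSet M, a x ≤ b :=
  ⟨fun hab _ hx => le_of_mem_closure_convexHull hab hx,
    mem_closure_convexHull_of_forall_le hM_smul hM_one hM_sol⟩

end WeakDual

section ConjugateEpigraph

variable {X Z : Type*} [AddCommGroup X] [Module ℝ X] [TopologicalSpace X]
  [AddCommGroup Z] [Module ℝ Z] [TopologicalSpace Z]

def conjugateEpigraph (g : X → Z) (l : WeakDual ℝ Z) : Set (WeakDual ℝ X × ℝ) :=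
  {q | ∀ x, q.1 x - l (g x) ≤ q.2}

theorem smul_mem_conjugateEpigraph {g : X → Z} {l : WeakDual ℝ Z} {q : WeakDual ℝ X × ℝ}
    (hq : q ∈ conjugateEpigraph g l) {t : ℝ} (ht : 0 ≤ t) :
    t • q ∈ conjugateEpigraph g (t • l) := fun x => by
  change t * q.1 x - t * l (g x) ≤ t * q.2
  nlinarith [hq x]

theorem zero_one_mem_conjugateEpigraph (g : X → Z) :
    ((0 : WeakDual ℝ X), (1 : ℝ)) ∈ conjugateEpigraph g 0 := fun _ => by
  change (0 : ℝ) - 0 ≤ 1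
  norm_num

theorem le_of_mem_conjugateEpigraph {S : Set Z} {g : X → Z} {l : WeakDual ℝ Z}
    (hl : ∀ s ∈ S, 0 ≤ l s) {q : WeakDual ℝ X × ℝ} (hq : q ∈ conjugateEpigraph g l) {x : X}
    (hx : g x ∈ -S) : q.1 x ≤ q.2 := by
  have := hl _ hx
  rw [map_neg] at this
  linarith [hq x]

variable [IsTopologicalAddGroup X] [ContinuousSMul ℝ X] [LocallyConvexSpace ℝ X]
  [IsTopologicalAddGroup Z] [ContinuousSMul ℝ Z] [LocallyConvexSpace ℝ Z]

theorem exists_mem_conjugateEpigraph_lt {S : Set Z} (hS_ne : S.Nonempty)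
    (hS_cone : ∀ r : ℝ, 0 ≤ r → ∀ z ∈ S, r • z ∈ S) {g : X → Z}
    (hg_conv : Convex ℝ {p : X × Z | p.2 - g p.1 ∈ S})
    (hg_closed : IsClosed {p : X × Z | p.2 - g p.1 ∈ S}) {x : X} (hx : g x ∉ -S) :
    ∃ l : WeakDual ℝ Z, (∀ s ∈ S, 0 ≤ l s) ∧ ∃ q ∈ conjugateEpigraph g l, q.2 < q.1 x := by
  have hS_zero : (0 : Z) ∈ S := by
    obtain ⟨z, hz⟩ := hS_ne
    simpa using hS_cone 0 le_rfl z hz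
  obtain ⟨f, α, hf_lt, hα_lt⟩ := geometric_hahn_banach_closed_point hg_conv hg_closed
    (x := (x, 0)) (by simpa using hx)
  set f₁ := f.comp (.inl ℝ X Z)
  set f₂ := f.comp (.inr ℝ X Z)
  have hf : ∀ p, f p = f₁ p.1 + f₂ p.2 := fun p => (f.comp_inl_add_comp_inr p).symm
  have hf₂ : ∀ s ∈ S, f₂ s ≤ 0 := fun s hs =>
    nonpos_of_forall_mul_lt (u := α - f₁ x - f₂ (g x)) fun t ht => by
      have := hf_lt (x, g x + t • s) (by simpa using hS_cone t ht s hs)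
      rw [hf, map_add, map_smul, smul_eq_mul] at this
      linarith
  refine ⟨StrongDual.toWeakDual (-f₂), fun s hs => show 0 ≤ -f₂ s by linarith [hf₂ s hs],
    (StrongDual.toWeakDual f₁, α),
    fun y => ?_, by simpa [hf] using hα_lt⟩
  have := hf_lt (y, g y) (by simpa using hS_zero)
  rw [hf] at this
  simp only [StrongDual.toWeakDual_apply, neg_apply]
  linarith

end ConjugateEpigraph

section RobustMomentCone

variable {X Z ι : Type*} [AddCommGroup X] [Module ℝ X] [TopologicalSpace X]
  [AddCommGroup Z] [Module ℝ Z] [TopologicalSpace Z]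

def robustMomentCone (S : Set Z) (G : ι → X → Z) : Set (WeakDual ℝ X × ℝ) :=
  ⋃ u : ι, ⋃ l ∈ {l : WeakDual ℝ Z | ∀ s ∈ S, 0 ≤ l s}, conjugateEpigraph (G u) l

theorem mem_robustMomentCone {S : Set Z} {G : ι → X → Z} {q : WeakDual ℝ X × ℝ} :
    q ∈ robustMomentCone S G ↔
      ∃ u, ∃ l : WeakDual ℝ Z, (∀ s ∈ S, 0 ≤ l s) ∧ q ∈ conjugateEpigraph (G u) l := by
  simp only [robustMomentCone, Set.mem_iUnion, Set.mem_ofPred_eq, exists_prop]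

theorem smul_mem_robustMomentCone {S : Set Z} {G : ι → X → Z} {t : ℝ} (ht : 0 ≤ t)
    {q : WeakDual ℝ X × ℝ} (hq : q ∈ robustMomentCone S G) : t • q ∈ robustMomentCone S G := by
  obtain ⟨u, l, hl, hq⟩ := mem_robustMomentCone.1 hq
  exact mem_robustMomentCone.2
    ⟨u, t • l, fun s hs => mul_nonneg ht (hl s hs), smul_mem_conjugateEpigraph hq ht⟩

theorem zero_one_mem_robustMomentCone [Nonempty ι] (S : Set Z) (G : ι → X → Z) :
    ((0 : WeakDual ℝ X), (1 : ℝ)) ∈ robustMomentCone S G :=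
  mem_robustMomentCone.2 ⟨Classical.arbitrary ι, 0, fun _ _ => le_rfl,
    zero_one_mem_conjugateEpigraph _⟩

theorem solutionSet_robustMomentCone [IsTopologicalAddGroup X] [ContinuousSMul ℝ X]
    [LocallyConvexSpace ℝ X] [IsTopologicalAddGroup Z] [ContinuousSMul ℝ Z]
    [LocallyConvexSpace ℝ Z] {S : Set Z} (hS_ne : S.Nonempty)
    (hS_cone : ∀ r : ℝ, 0 ≤ r → ∀ z ∈ S, r • z ∈ S) {G : ι → X → Z}
    (hG_conv : ∀ u : ι, Convex ℝ {p : X × Z | p.2 - G u p.1 ∈ S})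
    (hG_closed : ∀ u : ι, IsClosed {p : X × Z | p.2 - G u p.1 ∈ S}) :
    solutionSet (robustMomentCone S G) = {x : X | ∀ u : ι, G u x ∈ -S} := by
  ext x
  refine ⟨fun hx u => by_contra fun hxu => ?_, fun hx q hq => ?_⟩
  · obtain ⟨l, hl, q, hq, hlt⟩ :=
      exists_mem_conjugateEpigraph_lt hS_ne hS_cone (hG_conv u) (hG_closed u) hxu
    exact hlt.not_ge (hx q (mem_robustMomentCone.2 ⟨u, l, hl, hq⟩))
  · obtain ⟨u, l, hl, hq⟩ := mem_robustMomentCone.1 hq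
    exact le_of_mem_conjugateEpigraph hl hq (hx u)

end RobustMomentCone

theorem stmt0
    {X Z : Type*}
    [AddCommGroup X] [Module ℝ X] [TopologicalSpace X] [IsTopologicalAddGroup X]
    [ContinuousSMul ℝ X] [LocallyConvexSpace ℝ X]
    [AddCommGroup Z] [Module ℝ Z] [TopologicalSpace Z] [IsTopologicalAddGroup Z]
    [ContinuousSMul ℝ Z] [LocallyConvexSpace ℝ Z]
    (S : Set Z) (hS_ne : S.Nonempty)
    (hS_cone : ∀ r : ℝ, 0 ≤ r → ∀ z ∈ S, r • z ∈ S)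
    {ι : Type*} [Nonempty ι] (G : ι → X → Z)
    (hG_conv : ∀ u : ι, Convex ℝ {p : X × Z | p.2 - G u p.1 ∈ S})
    (hG_closed : ∀ u : ι, IsClosed {p : X × Z | p.2 - G u p.1 ∈ S})
    (hF : {x : X | ∀ u : ι, G u x ∈ -S}.Nonempty)
    (xs : WeakDual ℝ X) (r : ℝ) :
    (∀ x : X, (∀ u : ι, G u x ∈ -S) → r ≤ xs x) ↔
      (xs, r) ∈ -closure (convexHull ℝ
        (⋃ u : ι, ⋃ l ∈ {l : WeakDual ℝ Z | ∀ s ∈ S, 0 ≤ l s},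
          {q : WeakDual ℝ X × ℝ | ∀ x : X, q.1 x - l (G u x) ≤ q.2})) := by
  change _ ↔ (xs, r) ∈ -closure (convexHull ℝ (robustMomentCone S G))
  have hsol := solutionSet_robustMomentCone hS_ne hS_cone hG_conv hG_closed
  rw [Set.mem_neg, Prod.neg_mk, mem_closure_convexHull_iff_forall_le
    (fun t ht q hq => smul_mem_robustMomentCone ht hq) (zero_one_mem_robustMomentCone S G)
    (hsol ▸ hF), hsol]
  exact forall_congr' fun x => imp_congr_right fun _ => neg_le_neg_iff.symm
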